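/- arXiv:2010.02050 — 8 statements merged into one kernel-verified Lean document; each statement's English description precedes it below -/
import Mathlib

section
/- For every natural number n ≥ 1, define A := {√i + √j : i, j ∈ {1,…,n}} ∪ {√i − √j : i, j ∈ {1,…,n}} ⊆ ℝ and G := {(√i + √j, √i − √j) : i, j ∈ {1,…,n}}. Then G ⊆ A × A, |G| = n², |A +_G A| = n, |A −_G A| = n, and |A ·_G A| = 2n − 1. In particular max{|A +_G A|, |A −_G A|, |A ·_G A|} ≤ 2 · |G|^(1/2). -/
/-!
With `pairMap (i, j) = (√i + √j, √i - √j)` the three restricted operations collapse: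
the sum is `2√i`, the difference is `2√j`, and the product is `i - j`.
Since `√` is injective on `ℕ`, `pairMap` is injective, the sums and differences each take
`n` distinct values, and the products fill the integer interval `[1 - n, n - 1]`.
-/

open Finset

namespace Real

lemma sqrt_natCast_injective : Function.Injective fun n : ℕ => √(n : ℝ) :=
  fun i j h => Nat.cast_injective ((sqrt_inj i.cast_nonneg j.cast_nonneg).mp h)

lemma sqrt_add_sqrt_mul_sqrt_sub_sqrt {x y : ℝ} (hx : 0 ≤ x) (hy : 0 ≤ y) :
    (√x + √y) * (√x - √y) = x - y := by
  rw [← mul_self_sub_mul_self, mul_self_sqrt hx, mul_self_sqrt hy]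

end Real

namespace Nat

lemma image_intCast_sub_Icc_product {a b : ℕ} (hab : a ≤ b) :
    (Icc a b ×ˢ Icc a b).image (fun p : ℕ × ℕ => (p.1 : ℤ) - p.2) =
      Icc ((a : ℤ) - b) ((b : ℤ) - a) := by
  ext k
  simp only [mem_image, mem_product, mem_Icc, Prod.exists]
  constructor
  · rintro ⟨i, j, ⟨⟨hai, hib⟩, haj, hjb⟩, rfl⟩
    omega
  · rintro ⟨hlo, hhi⟩
    rcases le_or_gt 0 k with hk | hk
    · exact ⟨a + k.toNat, a, by omega⟩
    · exact ⟨a, a + (-k).toNat, by omega⟩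

end Nat

namespace Chang

noncomputable def pairMap (p : ℕ × ℕ) : ℝ × ℝ :=
  (√(p.1 : ℝ) + √(p.2 : ℝ), √(p.1 : ℝ) - √(p.2 : ℝ))

lemma pairMap_injective : Function.Injective pairMap := by
  rintro ⟨i, j⟩ ⟨i', j'⟩ h
  simp only [pairMap, Prod.mk.injEq] at h
  obtain ⟨hsum, hdiff⟩ := h
  have hi : √(i : ℝ) = √(i' : ℝ) := by linarith
  have hj : √(j : ℝ) = √(j' : ℝ) := by linarith
  rw [Real.sqrt_natCast_injective hi, Real.sqrt_natCast_injective hj]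

lemma twice_sqrt_natCast_injective : Function.Injective fun n : ℕ => 2 * √(n : ℝ) :=
  (mul_right_injective₀ two_ne_zero).comp Real.sqrt_natCast_injective

variable {s t : Finset ℕ}

lemma image_add_image_pairMap (ht : t.Nonempty) :
    ((s ×ˢ t).image pairMap).image (fun p => p.1 + p.2) = s.image fun i : ℕ => 2 * √(i : ℝ) := by
  have : (fun p : ℝ × ℝ => p.1 + p.2) ∘ pairMap = (fun i : ℕ => 2 * √(i : ℝ)) ∘ Prod.fst := by
    ext p; simp only [Function.comp, pairMap]; ring
  rw [image_image, this, ← image_image, product_image_fst ht]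

lemma image_sub_image_pairMap (hs : s.Nonempty) :
    ((s ×ˢ t).image pairMap).image (fun p => p.1 - p.2) = t.image fun j : ℕ => 2 * √(j : ℝ) := by
  have : (fun p : ℝ × ℝ => p.1 - p.2) ∘ pairMap = (fun j : ℕ => 2 * √(j : ℝ)) ∘ Prod.snd := by
    ext p; simp only [Function.comp, pairMap]; ring
  rw [image_image, this, ← image_image, product_image_snd hs]

lemma image_mul_image_pairMap :
    ((s ×ˢ t).image pairMap).image (fun p => p.1 * p.2) =
      ((s ×ˢ t).image fun p : ℕ × ℕ => (p.1 : ℤ) - p.2).image (Int.cast : ℤ → ℝ) := by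
  have : (fun p : ℝ × ℝ => p.1 * p.2) ∘ pairMap =
      (Int.cast : ℤ → ℝ) ∘ fun p : ℕ × ℕ => (p.1 : ℤ) - p.2 := by
    ext p
    simp only [Function.comp, pairMap, Int.cast_sub, Int.cast_natCast]
    exact Real.sqrt_add_sqrt_mul_sqrt_sub_sqrt p.1.cast_nonneg p.2.cast_nonneg
  rw [image_image, this, ← image_image]

end Chang

open Chang in
/-- Chang's construction: with `A = {√i ± √j : i,j ∈ [n]}` and
`G = {(√i + √j, √i - √j) : i,j ∈ [n]}`, we have `G ⊆ A × A`, `|G| = n²`,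
`|A +_G A| = n`, `|A -_G A| = n`, `|A ·_G A| = 2n - 1`, and in particular
`max {|A +_G A|, |A -_G A|, |A ·_G A|} ≤ 2 |G|^(1/2)`. -/
theorem chang_construction (n : ℕ) (hn : 1 ≤ n) :
    let I := Finset.Icc 1 n
    let A := ((I ×ˢ I).image (fun p => Real.sqrt p.1 + Real.sqrt p.2)) ∪
             ((I ×ˢ I).image (fun p => Real.sqrt p.1 - Real.sqrt p.2))
    let G := (I ×ˢ I).image
      (fun p => (Real.sqrt p.1 + Real.sqrt p.2, Real.sqrt p.1 - Real.sqrt p.2))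
    G ⊆ A ×ˢ A ∧
    G.card = n ^ 2 ∧
    (G.image (fun p => p.1 + p.2)).card = n ∧
    (G.image (fun p => p.1 - p.2)).card = n ∧
    (G.image (fun p => p.1 * p.2)).card = 2 * n - 1 ∧
    ((max (max (G.image (fun p => p.1 + p.2)).card
               (G.image (fun p => p.1 - p.2)).card)
          (G.image (fun p => p.1 * p.2)).card : ℕ) : ℝ) ≤
      2 * (G.card : ℝ) ^ ((1 : ℝ) / 2) := by
  intro I A G
  have hG : G = (I ×ˢ I).image pairMap := rfl
  have hI : I.Nonempty := nonempty_Icc.mpr hn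
  have hGA : G ⊆ A ×ˢ A := by
    intro p hp
    obtain ⟨q, hq, rfl⟩ := mem_image.mp hp
    exact mem_product.mpr
      ⟨mem_union_left _ (mem_image_of_mem _ hq), mem_union_right _ (mem_image_of_mem _ hq)⟩
  have hGcard : G.card = n ^ 2 := by
    rw [hG, card_image_of_injective _ pairMap_injective, card_product, Nat.card_Icc,
      Nat.add_sub_cancel, sq]
  have hsum : (G.image (fun p => p.1 + p.2)).card = n := by
    rw [hG, image_add_image_pairMap hI, card_image_of_injective _ twice_sqrt_natCast_injective,
      Nat.card_Icc, Nat.add_sub_cancel]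
  have hdiff : (G.image (fun p => p.1 - p.2)).card = n := by
    rw [hG, image_sub_image_pairMap hI, card_image_of_injective _ twice_sqrt_natCast_injective,
      Nat.card_Icc, Nat.add_sub_cancel]
  have hprod : (G.image (fun p => p.1 * p.2)).card = 2 * n - 1 := by
    rw [hG, image_mul_image_pairMap, card_image_of_injective _ Int.cast_injective,
      Nat.image_intCast_sub_Icc_product hn, Int.card_Icc]
    omega
  refine ⟨hGA, hGcard, hsum, hdiff, hprod, ?_⟩
  rw [hsum, hdiff, hprod, hGcard, ← Real.sqrt_eq_rpow, Nat.cast_pow, Real.sqrt_sq n.cast_nonneg]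
  exact_mod_cast max_le (max_le (by omega) (by omega)) (by omega)
end

section
/- For every natural number n ≥ 2 there exist finite sets A, B ⊆ ℝ and a set G ⊆ A × B such that |G| = 2n², |A +_G B| = n, and |A ·_G B| = n. In particular, max{|A +_G B|, |A ·_G B|} = |G|^(1/2) / √2. -/
/-!
A pair `(x, y)` is determined up to order by its sum `s` and product `p`: it is the pair of roots
of `t² - s t + p`, which are real and distinct when `4p < s²`. So for finite sets `S`, `P` of
admissible sums and products, the set `G` of all pairs `(x, y)` with `x + y ∈ S` and `x y ∈ P`
has exactly `2 |S| |P|` elements, while `A +_G B = S` and `A ·_G B = P`. Taking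
`S = {0, …, n - 1}` and `P = {-1, …, -n}` gives the theorem.
-/

open Finset

/-- The roots of `t² - s t + p` for `q = (s, p)`, the larger one first. -/
noncomputable def vietaRoots (q : ℝ × ℝ) : ℝ × ℝ :=
  ((q.1 + √(q.1 ^ 2 - 4 * q.2)) / 2, (q.1 - √(q.1 ^ 2 - 4 * q.2)) / 2)

namespace vietaRoots

lemma fst_add_snd (q : ℝ × ℝ) : (vietaRoots q).1 + (vietaRoots q).2 = q.1 := by
  simp only [vietaRoots]
  ring

lemma fst_mul_snd {q : ℝ × ℝ} (hq : 4 * q.2 ≤ q.1 ^ 2) :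
    (vietaRoots q).1 * (vietaRoots q).2 = q.2 := by
  have hsq : √(q.1 ^ 2 - 4 * q.2) ^ 2 = q.1 ^ 2 - 4 * q.2 := Real.sq_sqrt (by linarith)
  simp only [vietaRoots]
  linear_combination -hsq / 4

lemma snd_lt_fst {q : ℝ × ℝ} (hq : 4 * q.2 < q.1 ^ 2) : (vietaRoots q).2 < (vietaRoots q).1 := by
  have : 0 < √(q.1 ^ 2 - 4 * q.2) := Real.sqrt_pos.2 (by linarith)
  simp only [vietaRoots]
  linarith

lemma injOn : Set.InjOn vietaRoots {q | 4 * q.2 ≤ q.1 ^ 2} := by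
  intro q hq r hr h
  ext
  · rw [← fst_add_snd q, ← fst_add_snd r, h]
  · rw [← fst_mul_snd hq, ← fst_mul_snd hr, h]

end vietaRoots

/-- All ordered pairs of reals whose sum lies in `S` and whose product lies in `P`, provided
every such sum and product is attained by real numbers. -/
noncomputable def vietaPairs (S P : Finset ℝ) : Finset (ℝ × ℝ) :=
  (S ×ˢ P).image vietaRoots ∪ (S ×ˢ P).image (Prod.swap ∘ vietaRoots)

namespace vietaPairs

variable {S P : Finset ℝ}

lemma card (h : ∀ q ∈ S ×ˢ P, 4 * q.2 < q.1 ^ 2) :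
    (vietaPairs S P).card = 2 * (S.card * P.card) := by
  have hinj : Set.InjOn vietaRoots ↑(S ×ˢ P) :=
    vietaRoots.injOn.mono fun q hq => (h q hq).le
  have hdisj : Disjoint ((S ×ˢ P).image vietaRoots) ((S ×ˢ P).image (Prod.swap ∘ vietaRoots)) := by
    simp only [disjoint_left, mem_image, Function.comp_apply, not_exists, not_and]
    rintro _ ⟨q, hq, rfl⟩ r hr hrq
    have hlt := vietaRoots.snd_lt_fst (h q hq)
    have hgt := vietaRoots.snd_lt_fst (h r hr)
    rw [← hrq] at hlt
    exact lt_asymm hlt hgt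
  rw [vietaPairs, card_union_of_disjoint hdisj, card_image_of_injOn hinj,
    card_image_of_injOn (Prod.swap_injective.injOn.comp hinj (Set.mapsTo_image _ _)),
    card_product]
  ring

lemma image_add (hP : P.Nonempty) : (vietaPairs S P).image (fun x => x.1 + x.2) = S := by
  have hswap : (fun x : ℝ × ℝ => x.1 + x.2) ∘ Prod.swap = fun x => x.1 + x.2 :=
    funext fun x => add_comm x.2 x.1
  have hsum : (fun x : ℝ × ℝ => x.1 + x.2) ∘ vietaRoots = Prod.fst :=
    funext vietaRoots.fst_add_snd
  rw [vietaPairs, image_union, image_image, image_image, ← Function.comp_assoc, hswap, hsum,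
    union_self, product_image_fst hP]

lemma image_mul (h : ∀ q ∈ S ×ˢ P, 4 * q.2 < q.1 ^ 2) (hS : S.Nonempty) :
    (vietaPairs S P).image (fun x => x.1 * x.2) = P := by
  have hswap : (fun x : ℝ × ℝ => x.1 * x.2) ∘ Prod.swap = fun x => x.1 * x.2 :=
    funext fun x => mul_comm x.2 x.1
  have hprod : Set.EqOn ((fun x : ℝ × ℝ => x.1 * x.2) ∘ vietaRoots) Prod.snd ↑(S ×ˢ P) :=
    fun q hq => vietaRoots.fst_mul_snd (h q hq).le
  rw [vietaPairs, image_union, image_image, image_image, ← Function.comp_assoc, hswap,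
    image_congr hprod, union_self, product_image_snd hS]

end vietaPairs

/-- The trivial bound is completely tight: for every `n ≥ 2` there are finite
`A, B ⊆ ℝ` and `G ⊆ A × B` with `|G| = 2n²`, `|A +_G B| = n` and `|A ·_G B| = n`;
in particular `max {|A +_G B|, |A ·_G B|} = |G|^(1/2) / √2`. -/
theorem trivial_bound_is_tight (n : ℕ) (hn : 2 ≤ n) :
    ∃ (A B : Finset ℝ) (G : Finset (ℝ × ℝ)), G ⊆ A ×ˢ B ∧
      G.card = 2 * n ^ 2 ∧
      (G.image (fun p => p.1 + p.2)).card = n ∧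
      (G.image (fun p => p.1 * p.2)).card = n ∧
      ((max (G.image (fun p => p.1 + p.2)).card
            (G.image (fun p => p.1 * p.2)).card : ℕ) : ℝ) =
        (G.card : ℝ) ^ ((1 : ℝ) / 2) / Real.sqrt 2 := by
  set S : Finset ℝ := (range n).image (fun i : ℕ => (i : ℝ))
  set P : Finset ℝ := (range n).image (fun j : ℕ => -((j : ℝ) + 1))
  have hS : S.card = n := by
    rw [card_image_of_injective _ Nat.cast_injective, card_range]
  have hP : P.card = n := by
    rw [card_image_of_injective _ fun i j hij => by simpa using hij, card_range]
  have hne : (range n).Nonempty := nonempty_range_iff.2 (by omega)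
  have hdisc : ∀ q ∈ S ×ˢ P, 4 * q.2 < q.1 ^ 2 := by
    simp only [S, P, mem_product, mem_image]
    rintro ⟨s, p⟩ ⟨⟨i, -, rfl⟩, ⟨j, -, rfl⟩⟩
    nlinarith [sq_nonneg (i : ℝ), j.cast_nonneg (α := ℝ)]
  set G := vietaPairs S P
  have hG : G.card = 2 * n ^ 2 := by rw [vietaPairs.card hdisc, hS, hP, sq]
  have hadd : (G.image (fun p => p.1 + p.2)).card = n := by
    rw [vietaPairs.image_add (hne.image _), hS]
  have hmul : (G.image (fun p => p.1 * p.2)).card = n := by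
    rw [vietaPairs.image_mul hdisc (hne.image _), hP]
  refine ⟨G.image Prod.fst, G.image Prod.snd, G, subset_product, hG, hadd, hmul, ?_⟩
  rw [hadd, hmul, hG, max_self, ← Real.sqrt_eq_rpow, Nat.cast_mul, Nat.cast_ofNat,
    Real.sqrt_mul zero_le_two, Nat.cast_pow, Real.sqrt_sq n.cast_nonneg]
  field_simp
end

section
/- Let u, v, w be pairwise distinct primes and let u', v', w' be pairwise distinct primes. If u·√v/√w = u'·√v'/√w' (as real numbers), then u = u', v = v', and w = w'. -/
/-!
Clearing the denominators and squaring turns the equation into `u² v w' = u'² v' w` in `ℕ`.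
The prime `u` divides the left side twice; since it is coprime to `w` and the squarefree `v'`
can absorb at most one factor `u`, it must be `u'`. Cancelling `u²` leaves `v w' = v' w`, and
`v ≠ w` forces `v = v'`, hence `w' = w`.
-/

theorem sq_mul_mul_eq_of_mul_sqrt_div_sqrt_eq {a b c a' b' c' : ℝ} (hb : 0 ≤ b) (hb' : 0 ≤ b')
    (hc : 0 < c) (hc' : 0 < c') (h : a * √b / √c = a' * √b' / √c') :
    a ^ 2 * b * c' = a' ^ 2 * b' * c := by
  have hcross : a * √b * √c' = a' * √b' * √c :=
    (div_eq_div_iff (Real.sqrt_pos.2 hc).ne' (Real.sqrt_pos.2 hc').ne').1 h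
  rw [← Real.sq_sqrt hb, ← Real.sq_sqrt hb', ← Real.sq_sqrt hc.le, ← Real.sq_sqrt hc'.le]
  linear_combination (a * √b * √c' + a' * √b' * √c) * hcross

theorem Nat.Prime.eq_of_sq_dvd_sq_mul_mul {p q a b : ℕ} (hp : p.Prime) (hq : q.Prime)
    (ha : Squarefree a) (hpb : p.Coprime b) (h : p ^ 2 ∣ q ^ 2 * a * b) : p = q := by
  by_contra hpq
  have hpq2 : (p ^ 2).Coprime (q ^ 2) := Nat.Coprime.pow 2 2 ((Nat.coprime_primes hp hq).2 hpq)
  have hpa : p * p ∣ a := sq p ▸ hpq2.dvd_of_dvd_mul_left ((hpb.pow_left 2).dvd_of_dvd_mul_right h)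
  exact hp.one_lt.ne' (Nat.isUnit_iff.1 (ha p hpa))

theorem Nat.Prime.eq_and_eq_of_mul_eq_mul {p q r s : ℕ} (hp : p.Prime) (hq : q.Prime)
    (hr : r.Prime) (hpr : p ≠ r) (h : p * s = q * r) : p = q ∧ s = r := by
  have hpq : p = q := by
    rcases (hp.dvd_mul).1 (h ▸ dvd_mul_right p s) with hdvd | hdvd
    · exact (Nat.prime_dvd_prime_iff_eq hp hq).1 hdvd
    · exact absurd ((Nat.prime_dvd_prime_iff_eq hp hr).1 hdvd) hpr
  subst hpq
  exact ⟨rfl, Nat.eq_of_mul_eq_mul_left hp.pos h⟩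

theorem prime_sqrt_ratio_injective_general
    (u v w u' v' w' : ℕ)
    (hu : Nat.Prime u) (hv : Nat.Prime v) (hw : Nat.Prime w)
    (hu' : Nat.Prime u') (hv' : Nat.Prime v') (hw' : Nat.Prime w')
    (huw : u ≠ w) (hvw : v ≠ w)
    (heq : (u : ℝ) * Real.sqrt v / Real.sqrt w =
           (u' : ℝ) * Real.sqrt v' / Real.sqrt w') :
    u = u' ∧ v = v' ∧ w = w' := by
  have hsq : u ^ 2 * v * w' = u' ^ 2 * v' * w := by
    exact_mod_cast sq_mul_mul_eq_of_mul_sqrt_div_sqrt_eq (by positivity) (by positivity)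
      (by exact_mod_cast hw.pos) (by exact_mod_cast hw'.pos) heq
  obtain rfl : u = u' := hu.eq_of_sq_dvd_sq_mul_mul hu' hv'.squarefree
    ((Nat.coprime_primes hu hw).2 huw) (hsq ▸ dvd_mul_of_dvd_left (dvd_mul_right _ _) _)
  have hvw' : v * w' = v' * w :=
    Nat.eq_of_mul_eq_mul_left (pow_pos hu.pos 2) (by simpa only [mul_assoc] using hsq)
  obtain ⟨rfl, rfl⟩ := hv.eq_and_eq_of_mul_eq_mul hv' hw hvw hvw'
  exact ⟨rfl, rfl, rfl⟩

/-- For pairwise distinct primes `u, v, w` and pairwise distinct primes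
`u', v', w'`, the equality `u√v/√w = u'√v'/√w'` forces `(u,v,w) = (u',v',w')`. -/
theorem prime_sqrt_ratio_injective
    (u v w u' v' w' : ℕ)
    (hu : Nat.Prime u) (hv : Nat.Prime v) (hw : Nat.Prime w)
    (hu' : Nat.Prime u') (hv' : Nat.Prime v') (hw' : Nat.Prime w')
    (huv : u ≠ v) (huw : u ≠ w) (hvw : v ≠ w)
    (huv' : u' ≠ v') (huw' : u' ≠ w') (hvw' : v' ≠ w')
    (heq : (u : ℝ) * Real.sqrt v / Real.sqrt w =
           (u' : ℝ) * Real.sqrt v' / Real.sqrt w') :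
    u = u' ∧ v = v' ∧ w = w' :=
  prime_sqrt_ratio_injective_general u v w u' v' w' hu hv hw hu' hv' hw' huw hvw heq
end

section
/- For every natural number n ≥ 1 and every λ ∈ ℝ with λ ≠ 0, there exist finite sets X, Y ⊆ ℝ with 0 ∉ Y and a set G ⊆ X × Y with |G| = n², such that |X +_G Y| ≤ 2n, |X +_G λY| ≤ 2n, and |X /_G Y| ≤ 2n. In particular, max{|X +_G Y|, |X +_G λY|, |X /_G Y|} ≤ 2 · |G|^(1/2). -/
/-!
Put `n` points `p = (a, b)` with `b ≠ 0` on the line `a + b = 1` so that each value `a + λ b`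
is a power of two (for `λ ≠ 1` take the intersections with the lines `a + λ b = 2 ^ v`; for
`λ = 1` any `n` points will do), and let `G` be the set of all rescalings `2 ^ u • p`,
`1 ≤ u ≤ n`. The rescalings of one point share the ratio `a / b`, while `a + b` and `a + λ b`
become products of two powers of two with exponents at most `n`, so each restricted set has at
most `2 n` elements.
-/

open Finset
open scoped Pointwise

lemma image_smul_eq_mul_image (T : Finset ℝ) (P : Finset (ℝ × ℝ)) (μ : ℝ) :
    (T • P).image (fun q => q.1 + μ * q.2) = T * P.image (fun p => p.1 + μ * p.2) :=
  image_image₂_distrib_right fun t p => by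
    simp only [Prod.smul_fst, Prod.smul_snd, smul_eq_mul]; ring

section ScaledPoints

variable {T : Finset ℝ} {P : Finset (ℝ × ℝ)}

lemma image_div_smul_subset (hT : 0 ∉ T) :
    (T • P).image (fun q => q.1 / q.2) ⊆ P.image (fun p => p.1 / p.2) := by
  intro r hr
  obtain ⟨_, htp, rfl⟩ := mem_image.mp hr
  obtain ⟨t, ht, p, hp, rfl⟩ := mem_smul.mp htp
  have ht0 : t ≠ 0 := ne_of_mem_of_not_mem ht hT
  exact mem_image.mpr ⟨p, hp, by simp [mul_div_mul_left _ _ ht0]⟩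

lemma card_smul_of_fst_add_snd_eq_one (hT : 0 ∉ T) (hP : ∀ p ∈ P, p.1 + p.2 = 1) :
    #(T • P) = #T * #P := by
  refine card_image₂_iff.mpr ?_
  rintro ⟨t, p⟩ htp ⟨t', p'⟩ htp' h
  simp only [Set.mem_prod, mem_coe] at htp htp' h
  have hsum := congrArg (fun q : ℝ × ℝ => q.1 + q.2) h
  simp only [Prod.smul_fst, Prod.smul_snd, smul_eq_mul, ← mul_add, hP p htp.2, hP p' htp'.2,
    mul_one] at hsum
  subst hsum
  exact Prod.ext rfl (smul_right_injective _ (ne_of_mem_of_not_mem htp.1 hT) h)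

lemma zero_notMem_image_snd_smul (hT : 0 ∉ T) (hP : ∀ p ∈ P, p.2 ≠ 0) :
    0 ∉ (T • P).image Prod.snd := by
  simp only [mem_image, not_exists, not_and]
  intro _ htp
  obtain ⟨t, ht, p, hp, rfl⟩ := mem_smul.mp htp
  exact mul_ne_zero (ne_of_mem_of_not_mem ht hT) (hP p hp)

end ScaledPoints

lemma image_pow_Icc_mul_subset {M : Type*} [Monoid M] [DecidableEq M] (x : M) (a b c d : ℕ) :
    (Icc a b).image (x ^ ·) * (Icc c d).image (x ^ ·) ⊆
      (Icc (a + c) (b + d)).image (x ^ ·) := by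
  intro y hy
  obtain ⟨_, hxi, _, hxj, rfl⟩ := mem_mul.mp hy
  obtain ⟨i, hi, rfl⟩ := mem_image.mp hxi
  obtain ⟨j, hj, rfl⟩ := mem_image.mp hxj
  rw [mem_Icc] at hi hj
  exact mem_image.mpr ⟨i + j, mem_Icc.mpr ⟨by omega, by omega⟩, pow_add x i j⟩

lemma exists_points_on_line_powers_of_two (lam : ℝ) (n : ℕ) :
    ∃ P : Finset (ℝ × ℝ), #P = n ∧ (∀ p ∈ P, p.1 + p.2 = 1 ∧ p.2 ≠ 0) ∧
      P.image (fun p => p.1 + lam * p.2) ⊆ (Icc 0 n).image ((2 : ℝ) ^ ·) := by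
  have hpow : Function.Injective ((2 : ℝ) ^ · : ℕ → ℝ) :=
    pow_right_injective₀ two_pos (by norm_num)
  by_cases hlam : lam = 1
  · subst hlam
    refine ⟨(Icc 1 n).image fun v => (1 - (2 ^ v)⁻¹, (2 ^ v)⁻¹), ?_, ?_, ?_⟩
    · rw [card_image_of_injective _ fun v w h => hpow (inv_injective (congrArg Prod.snd h))]
      simp
    · simp only [mem_image, forall_exists_index, and_imp]
      rintro _ v - rfl
      simp
    · simp only [subset_iff, mem_image, forall_exists_index, and_imp]
      rintro _ _ v - rfl rfl
      exact ⟨0, by simp, by ring⟩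
  · have hlam1 : lam - 1 ≠ 0 := sub_ne_zero.mpr hlam
    -- the intersection of the lines `a + b = 1` and `a + λ b = 2 ^ v`
    refine ⟨(Icc 1 n).image fun v => ((lam - 2 ^ v) / (lam - 1), (2 ^ v - 1) / (lam - 1)),
      ?_, ?_, ?_⟩
    · rw [card_image_of_injective _ fun v w h =>
        hpow (sub_left_injective ((div_left_inj' hlam1).mp (congrArg Prod.snd h)))]
      simp
    · simp only [mem_image, mem_Icc, forall_exists_index, and_imp]
      rintro _ v hv - rfl
      refine ⟨by field_simp; ring, div_ne_zero (sub_ne_zero.mpr ?_) hlam1⟩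
      exact (one_lt_pow₀ one_lt_two (by omega)).ne'
    · simp only [subset_iff, mem_image, mem_Icc, forall_exists_index, and_imp]
      rintro _ _ v hv1 hvn rfl rfl
      exact ⟨v, ⟨v.zero_le, hvn⟩, by field_simp; ring⟩

lemma card_image_linear_smul_le (x μ : ℝ) (P : Finset (ℝ × ℝ)) {a b c d : ℕ}
    (hP : P.image (fun p => p.1 + μ * p.2) ⊆ (Icc c d).image (x ^ ·)) :
    #(((Icc a b).image (x ^ ·) • P).image fun q => q.1 + μ * q.2) ≤ b + d + 1 - (a + c) := by
  rw [image_smul_eq_mul_image]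
  calc _ ≤ #((Icc (a + c) (b + d)).image (x ^ ·)) :=
        card_le_card ((mul_subset_mul_left hP).trans (image_pow_Icc_mul_subset x a b c d))
    _ ≤ b + d + 1 - (a + c) := card_image_le.trans (Nat.card_Icc _ _).le

lemma natCast_sq_rpow_half (n : ℕ) : ((n ^ 2 : ℕ) : ℝ) ^ ((1 : ℝ) / 2) = n := by
  rw [← Real.sqrt_eq_rpow, Nat.cast_pow, Real.sqrt_sq n.cast_nonneg]

theorem ratio_construction_general (n : ℕ) (lam : ℝ) :
    ∃ (X Y : Finset ℝ) (G : Finset (ℝ × ℝ)), G ⊆ X ×ˢ Y ∧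
      (0 : ℝ) ∉ Y ∧
      G.card = n ^ 2 ∧
      (G.image (fun p => p.1 + p.2)).card ≤ 2 * n ∧
      (G.image (fun p => p.1 + lam * p.2)).card ≤ 2 * n ∧
      (G.image (fun p => p.1 / p.2)).card ≤ 2 * n ∧
      ((max (max (G.image (fun p => p.1 + p.2)).card
                 (G.image (fun p => p.1 + lam * p.2)).card)
            (G.image (fun p => p.1 / p.2)).card : ℕ) : ℝ) ≤
        2 * (G.card : ℝ) ^ ((1 : ℝ) / 2) := by
  obtain ⟨P, hPcard, hP, hPlam⟩ := exists_points_on_line_powers_of_two lam n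
  set T : Finset ℝ := (Icc 1 n).image ((2 : ℝ) ^ ·)
  have hT : (0 : ℝ) ∉ T := by simp [T]
  have hcard : #(T • P) = n ^ 2 := by
    rw [card_smul_of_fst_add_snd_eq_one hT fun p hp => (hP p hp).1, hPcard,
      card_image_of_injective _ (pow_right_injective₀ two_pos (by norm_num)), Nat.card_Icc,
      Nat.add_sub_cancel, sq]
  have hsum : #((T • P).image fun q => q.1 + q.2) ≤ 2 * n := by
    have hP1 : P.image (fun p => p.1 + 1 * p.2) ⊆ (Icc 0 0).image ((2 : ℝ) ^ ·) :=
      fun c hc => by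
        obtain ⟨p, hp, rfl⟩ := mem_image.mp hc
        simp [(hP p hp).1]
    simpa only [one_mul] using (card_image_linear_smul_le 2 1 P hP1).trans (by omega)
  have hlam : #((T • P).image fun q => q.1 + lam * q.2) ≤ 2 * n :=
    (card_image_linear_smul_le 2 lam P hPlam).trans (by omega)
  have hdiv : #((T • P).image fun q => q.1 / q.2) ≤ 2 * n :=
    (card_le_card (image_div_smul_subset hT)).trans (card_image_le.trans (by omega))
  refine ⟨_, _, T • P, subset_product, zero_notMem_image_snd_smul hT fun p hp => (hP p hp).2,
    hcard, hsum, hlam, hdiv, ?_⟩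
  rw [hcard, natCast_sq_rpow_half]
  exact_mod_cast max_le (max_le hsum hlam) hdiv

/-- Products cannot be replaced with ratios: for every `n ≥ 1` and `λ ≠ 0`,
there exist `X, Y ⊆ ℝ` with `0 ∉ Y` and `G ⊆ X × Y` with `|G| = n²` and
`|X +_G Y|, |X +_G λY|, |X /_G Y| ≤ 2n`; in particular
`max {|X +_G Y|, |X +_G λY|, |X /_G Y|} ≤ 2 |G|^(1/2)`. -/
theorem ratio_construction (n : ℕ) (hn : 1 ≤ n) (lam : ℝ) (hlam : lam ≠ 0) :
    ∃ (X Y : Finset ℝ) (G : Finset (ℝ × ℝ)), G ⊆ X ×ˢ Y ∧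
      (0 : ℝ) ∉ Y ∧
      G.card = n ^ 2 ∧
      (G.image (fun p => p.1 + p.2)).card ≤ 2 * n ∧
      (G.image (fun p => p.1 + lam * p.2)).card ≤ 2 * n ∧
      (G.image (fun p => p.1 / p.2)).card ≤ 2 * n ∧
      ((max (max (G.image (fun p => p.1 + p.2)).card
                 (G.image (fun p => p.1 + lam * p.2)).card)
            (G.image (fun p => p.1 / p.2)).card : ℕ) : ℝ) ≤
        2 * (G.card : ℝ) ^ ((1 : ℝ) / 2) :=
  ratio_construction_general n lam
end

section
/- Let n ≥ 1 be a natural number and let λ ∈ ℝ with λ ∉ {0, 1}. Define X := {2^i + λ·2^j : i, j ∈ {1,…,n}}, Y := {−2^k − 2^l : k, l ∈ {1,…,n}}, and G := {(2^i + λ·2^j, −2^i − 2^j) : i, j ∈ {1,…,n}}. Then G ⊆ X × Y, 0 ∉ Y, |G| = n², |X +_G Y| ≤ n, |X +_G λY| ≤ n, and |X /_G Y| ≤ 2n − 1. -/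
/-!
Every pair of `G` has the form `(u i + λ u j, -u i - u j)` with `u k = 2^k`. Its sum is
`(λ - 1) u j` and its `λ`-weighted sum is `(1 - λ) u i`, so each of these sets has at most `n`
elements. Its ratio is homogeneous of degree `0` in `u`, hence a function of `j - i` alone, which
takes only `2n - 1` values. Finally, `λ ≠ 1` lets one read `j`, and then `i`, off the pair, so
`|G| = n²`.
-/

open Finset

section SkewPair

variable {ι R : Type*}

def skewPair [Ring R] (c : R) (u : ι → R) (p : ι × ι) : R × R :=
  (u p.1 + c * u p.2, -u p.1 - u p.2)

theorem skewPair_injective [CommRing R] [IsDomain R] {c : R} {u : ι → R} (hc : c ≠ 1)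
    (hu : Function.Injective u) : Function.Injective (skewPair c u) := by
  rintro ⟨i, j⟩ ⟨i', j'⟩ h
  obtain ⟨h₁, h₂⟩ := Prod.ext_iff.1 h
  simp only [skewPair] at h₁ h₂
  have hj : u j = u j' :=
    mul_left_cancel₀ (sub_ne_zero.2 hc) (by linear_combination h₁ + h₂)
  have hi : u i = u i' := by linear_combination -h₂ - hj
  rw [hu hi, hu hj]

theorem skewPair_fst_add_snd [Ring R] (c : R) (u : ι → R) (p : ι × ι) :
    (skewPair c u p).1 + (skewPair c u p).2 = (c - 1) * u p.2 := by
  simp only [skewPair]; noncomm_ring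

theorem skewPair_fst_add_mul_snd [CommRing R] (c : R) (u : ι → R) (p : ι × ι) :
    (skewPair c u p).1 + c * (skewPair c u p).2 = (1 - c) * u p.1 := by
  simp only [skewPair]; ring

theorem skewPair_pow_fst_div_snd [Field R] {b : R} (hb : b ≠ 0) (c : R) (p : ℕ × ℕ) :
    (skewPair c (b ^ ·) p).1 / (skewPair c (b ^ ·) p).2 =
      -((1 + c * b ^ ((p.2 : ℤ) - p.1)) / (1 + b ^ ((p.2 : ℤ) - p.1))) := by
  obtain ⟨i, j⟩ := p
  set t := b ^ ((j : ℤ) - i)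
  have hj : b ^ j = b ^ i * t := by
    rw [← zpow_natCast, ← zpow_natCast, ← zpow_add₀ hb, add_sub_cancel]
  simp only [skewPair, hj]
  rw [show b ^ i + c * (b ^ i * t) = b ^ i * (1 + c * t) by ring,
    show -b ^ i - b ^ i * t = b ^ i * -(1 + t) by ring,
    mul_div_mul_left _ _ (pow_ne_zero i hb), div_neg]

end SkewPair

theorem Finset.image_pair_subset_product_image {α β γ : Type*} [DecidableEq β] [DecidableEq γ]
    (s : Finset α) (f : α → β) (g : α → γ) :
    s.image (fun a => (f a, g a)) ⊆ s.image f ×ˢ s.image g := by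
  intro x hx
  obtain ⟨a, ha, rfl⟩ := mem_image.1 hx
  exact mem_product.2 ⟨mem_image_of_mem f ha, mem_image_of_mem g ha⟩

theorem Finset.card_image_le_of_factors {α β γ : Type*} [DecidableEq γ] {s : Finset α}
    {t : Finset β} {f : α → γ} (g : α → β) (h : β → γ) (hg : ∀ a ∈ s, g a ∈ t)
    (hf : ∀ a ∈ s, f a = h (g a)) : #(s.image f) ≤ #t := by
  classical
  calc #(s.image f) ≤ #(t.image h) := card_le_card fun x hx => by
        obtain ⟨a, ha, rfl⟩ := mem_image.1 hx
        exact mem_image.2 ⟨g a, hg a ha, (hf a ha).symm⟩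
    _ ≤ #t := card_image_le

theorem Int.card_Icc_one_sub_sub_one (n : ℕ) : #(Icc (1 - n : ℤ) (n - 1)) = 2 * n - 1 := by
  rw [Int.card_Icc]; omega

theorem explicit_ratio_construction_general (n : ℕ)
    (lam : ℝ) (hlam1 : lam ≠ 1) :
    let I := Finset.Icc 1 n
    let X := (I ×ˢ I).image (fun p => (2 : ℝ) ^ p.1 + lam * (2 : ℝ) ^ p.2)
    let Y := (I ×ˢ I).image (fun p => -(2 : ℝ) ^ p.1 - (2 : ℝ) ^ p.2)
    let G := (I ×ˢ I).image
      (fun p => ((2 : ℝ) ^ p.1 + lam * (2 : ℝ) ^ p.2,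
                 -(2 : ℝ) ^ p.1 - (2 : ℝ) ^ p.2))
    G ⊆ X ×ˢ Y ∧
    (0 : ℝ) ∉ Y ∧
    G.card = n ^ 2 ∧
    (G.image (fun p => p.1 + p.2)).card ≤ n ∧
    (G.image (fun p => p.1 + lam * p.2)).card ≤ n ∧
    (G.image (fun p => p.1 / p.2)).card ≤ 2 * n - 1 := by
  intro I X Y G
  have hG : G = (I ×ˢ I).image (skewPair lam ((2 : ℝ) ^ ·)) := rfl
  have hI : #I = n := Nat.card_Icc 1 n
  refine ⟨image_pair_subset_product_image _ _ _, ?_, ?_, ?_, ?_, ?_⟩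
  · simp only [Y, mem_image, not_exists, not_and]
    intro p _ h
    linarith [pow_pos (two_pos : (0 : ℝ) < 2) p.1, pow_pos (two_pos : (0 : ℝ) < 2) p.2]
  · rw [hG, card_image_of_injective _ (skewPair_injective hlam1
      (pow_right_injective₀ two_pos (by norm_num))), card_product, hI, sq]
  · rw [hG, image_image, ← hI]
    exact card_image_le_of_factors Prod.snd (fun j => (lam - 1) * 2 ^ j) (fun p hp => (mem_product.1 hp).2)
      fun p _ => skewPair_fst_add_snd _ _ p
  · rw [hG, image_image, ← hI]
    exact card_image_le_of_factors Prod.fst (fun i => (1 - lam) * 2 ^ i) (fun p hp => (mem_product.1 hp).1)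
      fun p _ => skewPair_fst_add_mul_snd _ _ p
  · rw [hG, image_image, ← Int.card_Icc_one_sub_sub_one]
    refine card_image_le_of_factors (fun p => (p.2 : ℤ) - p.1)
      (fun d => -((1 + lam * 2 ^ d) / (1 + 2 ^ d))) (fun p hp => ?_)
      fun p _ => skewPair_pow_fst_div_snd two_ne_zero lam p
    simp only [I, mem_product, Finset.mem_Icc] at hp ⊢
    omega

/-- The explicit ratio construction: with
`X = {2^i + λ2^j}`, `Y = {-2^k - 2^l}` and `G = {(2^i + λ2^j, -2^i - 2^j)}`
for `i, j, k, l ∈ {1,…,n}`, we have `G ⊆ X × Y`, `0 ∉ Y`, `|G| = n²`,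
`|X +_G Y| ≤ n`, `|X +_G λY| ≤ n` and `|X /_G Y| ≤ 2n - 1`. -/
theorem explicit_ratio_construction (n : ℕ) (hn : 1 ≤ n)
    (lam : ℝ) (hlam0 : lam ≠ 0) (hlam1 : lam ≠ 1) :
    let I := Finset.Icc 1 n
    let X := (I ×ˢ I).image (fun p => (2 : ℝ) ^ p.1 + lam * (2 : ℝ) ^ p.2)
    let Y := (I ×ˢ I).image (fun p => -(2 : ℝ) ^ p.1 - (2 : ℝ) ^ p.2)
    let G := (I ×ˢ I).image
      (fun p => ((2 : ℝ) ^ p.1 + lam * (2 : ℝ) ^ p.2,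
                 -(2 : ℝ) ^ p.1 - (2 : ℝ) ^ p.2))
    G ⊆ X ×ˢ Y ∧
    (0 : ℝ) ∉ Y ∧
    G.card = n ^ 2 ∧
    (G.image (fun p => p.1 + p.2)).card ≤ n ∧
    (G.image (fun p => p.1 + lam * p.2)).card ≤ n ∧
    (G.image (fun p => p.1 / p.2)).card ≤ 2 * n - 1 :=
  explicit_ratio_construction_general n lam hlam1
end

section
/- Let α, β ∈ ℝ with α ≠ 0 and β ≠ 0. For every natural number n ≥ 1, there exist finite sets A, B ⊆ ℝ and a set G ⊆ A × B such that |G| = 2n², |A ·_G B| ≤ n, and |(A + α) ·_G (B + β)| ≤ n. In particular, max{|A ·_G B|, |(A + α) ·_G (B + β)|} ≤ |G|^(1/2) / √2, so the restricted sum set is genuinely needed in the lower bound for max{|A +_G B|, |A ·_G B|, |(A + α) ·_G (B + β)|}. -/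
/-!
Prescribing `a * b = s` and `(a + α) * (b + β) = t` forces `β * a + α * b = t - s - α * β`,
so `a` is a root of the quadratic `β a² - (t - s - α β) a + α s`. When its discriminant is
positive, every pair `(s, t)` is realised by exactly two points `(a, b)`, and distinct pairs
`(s, t)` give distinct points. Taking `s` in an `n`-element set with `α β s < 0` (which makes
every discriminant positive) and `t` in any `n`-element set gives `2 n²` points whose products
and shifted products take at most `n` values each.
-/

namespace ShiftedProducts

open Finset

noncomputable def point (α β s t : ℝ) (ε : Bool) : ℝ × ℝ :=
  let u := t - s - α * β
  let a := (u + (if ε then 1 else -1) * √(u ^ 2 - 4 * α * β * s)) / (2 * β)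
  (a, (u - β * a) / α)

variable {α β s t : ℝ}

theorem point_fst_mul_snd (hα : α ≠ 0) (hβ : β ≠ 0)
    (hdisc : 4 * α * β * s ≤ (t - s - α * β) ^ 2) (ε : Bool) :
    (point α β s t ε).1 * (point α β s t ε).2 = s := by
  have hsq := Real.sq_sqrt (sub_nonneg.mpr hdisc)
  simp only [point]
  generalize √((t - s - α * β) ^ 2 - 4 * α * β * s) = r at hsq ⊢
  cases ε <;>
  · simp only [if_true, if_false, Bool.false_eq_true]
    field_simp
    linear_combination (-1 : ℝ) * hsq

theorem point_shifted_mul (hα : α ≠ 0) (hβ : β ≠ 0)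
    (hdisc : 4 * α * β * s ≤ (t - s - α * β) ^ 2) (ε : Bool) :
    ((point α β s t ε).1 + α) * ((point α β s t ε).2 + β) = t := by
  have hprod := point_fst_mul_snd hα hβ hdisc ε
  have hlin : α * (point α β s t ε).2 = t - s - α * β - β * (point α β s t ε).1 := by
    simp only [point]
    field_simp
  linear_combination hprod + hlin

theorem point_injective (hβ : β ≠ 0) (hdisc : 4 * α * β * s < (t - s - α * β) ^ 2) :
    Function.Injective (point α β s t) := by
  have hroot : 0 < √((t - s - α * β) ^ 2 - 4 * α * β * s) :=
    Real.sqrt_pos.mpr (sub_pos.mpr hdisc)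
  intro ε ε' h
  have hfst := congrArg Prod.fst h
  simp only [point] at hfst
  rw [div_left_inj' (mul_ne_zero two_ne_zero hβ)] at hfst
  cases ε <;> cases ε' <;>
    simp only [if_true, if_false, Bool.false_eq_true, one_mul, neg_one_mul, add_right_inj]
      at hfst ⊢ <;>
    linarith

noncomputable def pointSet (α β : ℝ) (S T : Finset ℝ) : Finset (ℝ × ℝ) :=
  (S ×ˢ T ×ˢ univ).image fun x => point α β x.1 x.2.1 x.2.2

variable {S T : Finset ℝ}

theorem card_pointSet (hα : α ≠ 0) (hβ : β ≠ 0)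
    (hdisc : ∀ s ∈ S, ∀ t ∈ T, 4 * α * β * s < (t - s - α * β) ^ 2) :
    (pointSet α β S T).card = 2 * S.card * T.card := by
  have hinj : Set.InjOn (fun x : ℝ × ℝ × Bool => point α β x.1 x.2.1 x.2.2)
      ↑(S ×ˢ T ×ˢ (univ : Finset Bool)) := by
    rintro ⟨s, t, ε⟩ hx ⟨s', t', ε'⟩ hx' h
    simp only at h
    simp only [coe_product, coe_univ, Set.mem_prod, mem_coe, Set.mem_univ, and_true] at hx hx'
    have hd := (hdisc s hx.1 t hx.2).le
    have hd' := (hdisc s' hx'.1 t' hx'.2).le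
    have hs : s = s' := by
      rw [← point_fst_mul_snd hα hβ hd ε, ← point_fst_mul_snd hα hβ hd' ε', h]
    have ht : t = t' := by
      rw [← point_shifted_mul hα hβ hd ε, ← point_shifted_mul hα hβ hd' ε', h]
    subst hs ht
    rw [point_injective hβ (hdisc s hx.1 t hx.2) h]
  rw [pointSet, card_image_of_injOn hinj, card_product, card_product, card_univ,
    Fintype.card_bool]
  ring

theorem image_mul_pointSet_subset (hα : α ≠ 0) (hβ : β ≠ 0)
    (hdisc : ∀ s ∈ S, ∀ t ∈ T, 4 * α * β * s < (t - s - α * β) ^ 2) :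
    (pointSet α β S T).image (fun p => p.1 * p.2) ⊆ S := by
  simp only [pointSet, image_image, image_subset_iff, mem_product, mem_univ, and_true]
  rintro ⟨s, t, ε⟩ ⟨hs, ht⟩
  simpa [point_fst_mul_snd hα hβ (hdisc s hs t ht).le ε] using hs

theorem image_shifted_mul_pointSet_subset (hα : α ≠ 0) (hβ : β ≠ 0)
    (hdisc : ∀ s ∈ S, ∀ t ∈ T, 4 * α * β * s < (t - s - α * β) ^ 2) :
    (pointSet α β S T).image (fun p => (p.1 + α) * (p.2 + β)) ⊆ T := by
  simp only [pointSet, image_image, image_subset_iff, mem_product, mem_univ, and_true]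
  rintro ⟨s, t, ε⟩ ⟨hs, ht⟩
  simpa [point_shifted_mul hα hβ (hdisc s hs t ht).le ε] using ht

end ShiftedProducts

open ShiftedProducts Finset in
theorem shifted_products_construction_general (α β : ℝ) (hα : α ≠ 0) (hβ : β ≠ 0)
    (n : ℕ) :
    ∃ (A B : Finset ℝ) (G : Finset (ℝ × ℝ)), G ⊆ A ×ˢ B ∧
      G.card = 2 * n ^ 2 ∧
      (G.image (fun p => p.1 * p.2)).card ≤ n ∧
      (G.image (fun p => (p.1 + α) * (p.2 + β))).card ≤ n ∧
      ((max (G.image (fun p => p.1 * p.2)).card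
            (G.image (fun p => (p.1 + α) * (p.2 + β))).card : ℕ) : ℝ) ≤
        (G.card : ℝ) ^ ((1 : ℝ) / 2) / Real.sqrt 2 := by
  classical
  have hαβ : α * β ≠ 0 := mul_ne_zero hα hβ
  set T : Finset ℝ := (Icc 1 n).image Nat.cast
  set S : Finset ℝ := T.image (fun t => -(α * β) * t)
  have hT : T.card = n := by
    rw [card_image_of_injective _ Nat.cast_injective, Nat.card_Icc, Nat.add_sub_cancel]
  have hS : S.card = n := by
    rw [card_image_of_injective _ (mul_right_injective₀ (neg_ne_zero.mpr hαβ)), hT]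
  have hdisc : ∀ s ∈ S, ∀ t ∈ T, 4 * α * β * s < (t - s - α * β) ^ 2 := by
    simp only [S, T, mem_image, mem_Icc]
    rintro _ ⟨_, ⟨i, ⟨hi, -⟩, rfl⟩, rfl⟩ t -
    have hi : (0 : ℝ) < i := by exact_mod_cast hi
    nlinarith [sq_nonneg (t - -(α * β) * i - α * β), mul_pos (mul_self_pos.mpr hαβ) hi]
  set G := pointSet α β S T
  have hG : G.card = 2 * n ^ 2 := by rw [card_pointSet hα hβ hdisc, hS, hT]; ring
  have hmul := (card_le_card (image_mul_pointSet_subset hα hβ hdisc)).trans hS.le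
  have hshift := (card_le_card (image_shifted_mul_pointSet_subset hα hβ hdisc)).trans hT.le
  refine ⟨_, _, G, subset_product, hG, hmul, hshift, ?_⟩
  have hbound : (G.card : ℝ) ^ ((1 : ℝ) / 2) / √2 = n := by
    rw [hG, ← Real.sqrt_eq_rpow, Nat.cast_mul, Nat.cast_ofNat, Nat.cast_pow,
      Real.sqrt_mul zero_le_two, Real.sqrt_sq n.cast_nonneg]
    field_simp
  rw [hbound]
  exact_mod_cast max_le hmul hshift

/-- All three sets are needed in the variant: for `α, β ≠ 0` and every `n ≥ 1`
there exist `A, B ⊆ ℝ` and `G ⊆ A × B` with `|G| = 2n²`, `|A ·_G B| ≤ n` and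
`|(A+α) ·_G (B+β)| ≤ n`; in particular
`max {|A ·_G B|, |(A+α) ·_G (B+β)|} ≤ |G|^(1/2)/√2`. -/
theorem shifted_products_construction (α β : ℝ) (hα : α ≠ 0) (hβ : β ≠ 0)
    (n : ℕ) (hn : 1 ≤ n) :
    ∃ (A B : Finset ℝ) (G : Finset (ℝ × ℝ)), G ⊆ A ×ˢ B ∧
      G.card = 2 * n ^ 2 ∧
      (G.image (fun p => p.1 * p.2)).card ≤ n ∧
      (G.image (fun p => (p.1 + α) * (p.2 + β))).card ≤ n ∧
      ((max (G.image (fun p => p.1 * p.2)).card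
            (G.image (fun p => (p.1 + α) * (p.2 + β))).card : ℕ) : ℝ) ≤
        (G.card : ℝ) ^ ((1 : ℝ) / 2) / Real.sqrt 2 :=
  shifted_products_construction_general α β hα hβ n
end

section
/- Let λ ∈ ℝ with λ ∉ {-1, 1}, and let f : ℝ² → ℝ be defined by f(x,y) = (1/(1−λ))² · (x − y)(y − λx). Then there do not exist a nonempty open set U ⊆ ℝ² and infinitely differentiable (C^∞) functions ψ, φ₁, φ₂ : ℝ → ℝ such that f(x,y) = ψ(φ₁(x) + φ₂(y)) for all (x,y) ∈ U. -/
/-- Non-degeneracy of `F(X,Y,Z) = (1/(1-λ))²(X-Y)(Y-λX) - Z` for `λ ∉ {-1,1}`: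
the function `f(x,y) = (1/(1-λ))²(x-y)(y-λx)` admits no local additive
decomposition `f(x,y) = ψ(φ₁(x) + φ₂(y))` with smooth `ψ, φ₁, φ₂` on any
nonempty open set. -/
theorem nondegenerate_dilate (lam : ℝ) (h1 : lam ≠ -1) (h2 : lam ≠ 1) :
    ¬ ∃ (U : Set (ℝ × ℝ)) (ψ φ₁ φ₂ : ℝ → ℝ),
        IsOpen U ∧ U.Nonempty ∧
        ContDiff ℝ (⊤ : ℕ∞) ψ ∧ ContDiff ℝ (⊤ : ℕ∞) φ₁ ∧ ContDiff ℝ (⊤ : ℕ∞) φ₂ ∧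
        ∀ p ∈ U, (1 / (1 - lam)) ^ 2 * (p.1 - p.2) * (p.2 - lam * p.1) =
          ψ (φ₁ p.1 + φ₂ p.2) := by
  rintro ⟨U, ψ, φ₁, φ₂, hUo, ⟨p₀, hp₀⟩, hψ, hφ₁, hφ₂, heq⟩
  obtain ⟨ε, hε, hball⟩ := Metric.isOpen_iff.mp hUo p₀ hp₀
  set c : ℝ := (1 / (1 - lam)) ^ 2 with hc_def
  have hlam1 : (1 : ℝ) - lam ≠ 0 := sub_ne_zero.mpr (Ne.symm h2)
  have hc : c ≠ 0 := pow_ne_zero _ (one_div_ne_zero hlam1)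
  have hμ : (1 : ℝ) + lam ≠ 0 := fun h => h1 (by linarith)
  set I := Metric.ball p₀.1 ε with hI_def
  set J := Metric.ball p₀.2 ε with hJ_def
  have hmem : ∀ x ∈ I, ∀ y ∈ J, (x, y) ∈ U := by
    intro x hx y hy
    apply hball
    have hxy : (x, y) ∈ I ×ˢ J := ⟨hx, hy⟩
    rwa [hI_def, hJ_def, ball_prod_same] at hxy
  have hdψ : Differentiable ℝ ψ := hψ.differentiable (by simp)
  have hdφ₁ : Differentiable ℝ φ₁ := hφ₁.differentiable (by simp)
  have hφ₁' : ContDiff ℝ (↑(⊤ : ℕ∞)) φ₁ := hφ₁.of_le (by simp)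
  have hA : Differentiable ℝ (deriv φ₁) :=
    ((contDiff_infty_iff_deriv.mp hφ₁').2).differentiable (by simp)
  set A := deriv φ₁ with hA_def
  set B := deriv φ₂ with hB_def
  -- x-partial derivative identity
  have K1 : ∀ x ∈ I, ∀ y ∈ J,
      c * ((1 + lam) * y - 2 * lam * x) = deriv ψ (φ₁ x + φ₂ y) * A x := by
    intro x hx y hy
    have hfd : HasDerivAt (fun t => c * (t - y) * (y - lam * t))
        (c * 1 * (y - lam * x) + c * (x - y) * (-(lam * 1))) x :=
      (((hasDerivAt_id x).sub_const y).const_mul c).mul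
        (((hasDerivAt_id x).const_mul lam).const_sub y)
    have hgd : HasDerivAt (fun t => ψ (φ₁ t + φ₂ y))
        (deriv ψ (φ₁ x + φ₂ y) * deriv φ₁ x) x := by
      have := ((hdψ (φ₁ x + φ₂ y)).hasDerivAt).comp x
        ((hdφ₁ x).hasDerivAt.add_const (φ₂ y))
      exact this
    have hev : (fun t => c * (t - y) * (y - lam * t)) =ᶠ[nhds x]
        (fun t => ψ (φ₁ t + φ₂ y)) := by
      filter_upwards [Metric.isOpen_ball.mem_nhds hx] with t ht
      exact heq (t, y) (hmem t ht y hy)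
    have h0 := hev.deriv_eq
    rw [hfd.deriv, hgd.deriv] at h0
    linear_combination h0
  -- y-partial derivative identity
  have K2 : ∀ x ∈ I, ∀ y ∈ J,
      c * ((1 + lam) * x - 2 * y) = deriv ψ (φ₁ x + φ₂ y) * B y := by
    intro x hx y hy
    have hdφ₂ : Differentiable ℝ φ₂ := hφ₂.differentiable (by simp)
    have hfd : HasDerivAt (fun t => c * (x - t) * (t - lam * x))
        (c * (-1) * (y - lam * x) + c * (x - y) * 1) y :=
      (((hasDerivAt_id y).const_sub x).const_mul c).mul
        ((hasDerivAt_id y).sub_const (lam * x))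
    have hgd : HasDerivAt (fun t => ψ (φ₁ x + φ₂ t))
        (deriv ψ (φ₁ x + φ₂ y) * deriv φ₂ y) y := by
      have := ((hdψ (φ₁ x + φ₂ y)).hasDerivAt).comp y
        ((hdφ₂ y).hasDerivAt.const_add (φ₁ x))
      exact this
    have hev : (fun t => c * (x - t) * (t - lam * x)) =ᶠ[nhds y]
        (fun t => ψ (φ₁ x + φ₂ t)) := by
      filter_upwards [Metric.isOpen_ball.mem_nhds hy] with t ht
      exact heq (x, t) (hmem x hx t ht)
    have h0 := hev.deriv_eq
    rw [hfd.deriv, hgd.deriv] at h0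
    linear_combination h0
  -- combined identity
  have E : ∀ x ∈ I, ∀ y ∈ J,
      ((1 + lam) * y - 2 * lam * x) * B y = ((1 + lam) * x - 2 * y) * A x := by
    intro x hx y hy
    have h0 : c * (((1 + lam) * y - 2 * lam * x) * B y
        - ((1 + lam) * x - 2 * y) * A x) = 0 := by
      linear_combination (B y) * K1 x hx y hy - (A x) * K2 x hx y hy
    have h1' := (mul_eq_zero.mp h0).resolve_left hc
    linarith
  -- differentiate E in x
  have K3 : ∀ x ∈ I, ∀ y ∈ J,
      -(2 * lam) * B y = (1 + lam) * A x + ((1 + lam) * x - 2 * y) * deriv A x := by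
    intro x hx y hy
    have hterm : HasDerivAt
        (fun t => ((1 + lam) * y - 2 * lam * t) * B y
          - ((1 + lam) * t - 2 * y) * A t)
        ((-(2 * lam * 1)) * B y
          - ((1 + lam) * 1 * A x + ((1 + lam) * x - 2 * y) * deriv A x)) x :=
      ((((hasDerivAt_id x).const_mul (2 * lam)).const_sub ((1 + lam) * y)).mul_const
          (B y)).sub
        ((((hasDerivAt_id x).const_mul (1 + lam)).sub_const (2 * y)).mul
          ((hA x).hasDerivAt))
    have hev : (fun t => ((1 + lam) * y - 2 * lam * t) * B y
        - ((1 + lam) * t - 2 * y) * A t) =ᶠ[nhds x] (fun _ => (0 : ℝ)) := by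
      filter_upwards [Metric.isOpen_ball.mem_nhds hx] with t ht
      have := E t ht y hy
      linarith
    have h0 : deriv (fun t => ((1 + lam) * y - 2 * lam * t) * B y
        - ((1 + lam) * t - 2 * y) * A t) x = 0 := by
      rw [hev.deriv_eq]; simp
    rw [hterm.deriv] at h0
    linear_combination h0
  -- sample points
  have hx₁ : p₀.1 ∈ I := Metric.mem_ball_self hε
  have hy₁ : p₀.2 ∈ J := Metric.mem_ball_self hε
  have hy₂ : p₀.2 + ε / 2 ∈ J := by
    rw [hJ_def, Metric.mem_ball, Real.dist_eq]
    rw [show p₀.2 + ε / 2 - p₀.2 = ε / 2 by ring, abs_of_pos (by linarith)]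
    linarith
  -- A' is constant on I
  have hk' : ∀ x ∈ I, deriv A x = deriv A p₀.1 := by
    intro x hx
    have e1 := K3 x hx p₀.2 hy₁
    have e2 := K3 x hx (p₀.2 + ε / 2) hy₂
    have e3 := K3 p₀.1 hx₁ p₀.2 hy₁
    have e4 := K3 p₀.1 hx₁ (p₀.2 + ε / 2) hy₂
    have h5 : ε * (deriv A x - deriv A p₀.1) = 0 := by
      linear_combination e2 - e1 + e3 - e4
    have := (mul_eq_zero.mp h5).resolve_left (ne_of_gt hε)
    linarith
  set k := deriv A p₀.1 with hk_def
  set a₀ := (-(2 * lam) * B p₀.2 + 2 * p₀.2 * k) / (1 + lam) with ha₀_def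
  -- A is affine on I
  have hAff : ∀ x ∈ I, A x = a₀ - k * x := by
    intro x hx
    have h := K3 x hx p₀.2 hy₁
    rw [hk' x hx] at h
    have h2' : (1 + lam) * A x = (1 + lam) * (a₀ - k * x) := by
      rw [ha₀_def]
      field_simp
      linear_combination -h
    exact mul_left_cancel₀ hμ h2'
  -- slope must vanish
  have hk0 : k = 0 := by
    have hev : A =ᶠ[nhds p₀.1] (fun t => a₀ - k * t) := by
      filter_upwards [Metric.isOpen_ball.mem_nhds hx₁] with t ht
      exact hAff t ht
    have hder : HasDerivAt (fun t => a₀ - k * t) (-(k * 1)) p₀.1 :=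
      ((hasDerivAt_id p₀.1).const_mul k).const_sub a₀
    have h6 : deriv A p₀.1 = -(k * 1) := by rw [hev.deriv_eq, hder.deriv]
    have h7 : k = -(k * 1) := hk_def.trans h6
    linarith
  -- the constant value must vanish
  have rel : ∀ y ∈ J, -(2 * lam) * B y = (1 + lam) * a₀ := by
    intro y hy
    have h := K3 p₀.1 hx₁ y hy
    rw [hk' p₀.1 hx₁, hk0, hAff p₀.1 hx₁, hk0] at h
    linear_combination h
  have quad : ∀ y ∈ J, ((1 + lam) ^ 2 - 4 * lam) * y * a₀ = 0 := by
    intro y hy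
    have e := E p₀.1 hx₁ y hy
    rw [hAff p₀.1 hx₁, hk0] at e
    linear_combination (-2 * lam) * e - ((1 + lam) * y - 2 * lam * p₀.1) * rel y hy
  have ha0 : a₀ = 0 := by
    have q1 := quad p₀.2 hy₁
    have q2 := quad (p₀.2 + ε / 2) hy₂
    have h7 : ((1 + lam) ^ 2 - 4 * lam) * (ε / 2) * a₀ = 0 := by
      linear_combination q2 - q1
    have hne : ((1 + lam) ^ 2 - 4 * lam) ≠ 0 := by
      intro h
      apply hlam1
      have : (1 - lam) ^ 2 = 0 := by linarith [sq_nonneg (1 - lam)]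
      exact pow_eq_zero_iff (n := 2) (by norm_num) |>.mp this
    rcases mul_eq_zero.mp h7 with h | h
    · rcases mul_eq_zero.mp h with h' | h'
      · exact absurd h' hne
      · linarith
    · exact h
  -- final contradiction: f_x ≡ 0 on the box is impossible
  have hAx₁0 : A p₀.1 = 0 := by rw [hAff p₀.1 hx₁, hk0, ha0]; ring
  have f1 := K1 p₀.1 hx₁ p₀.2 hy₁
  have f2 := K1 p₀.1 hx₁ (p₀.2 + ε / 2) hy₂
  rw [hAx₁0, mul_zero] at f1 f2
  have h8 : c * ((1 + lam) * (ε / 2)) = 0 := by linear_combination f2 - f1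
  exact (mul_ne_zero hc (mul_ne_zero hμ (by linarith))) h8
end

section
/- Let f : ℝ² → ℝ be defined by f(x,y) = x(y − x). Then there do not exist a nonempty open set U ⊆ ℝ² and infinitely differentiable (C^∞) functions ψ, φ₁, φ₂ : ℝ → ℝ such that f(x,y) = ψ(φ₁(x) + φ₂(y)) for all (x,y) ∈ U. -/
/-- Non-degeneracy of `F(X,Y,Z) = X(Y-X) - Z`: the function `f(x,y) = x(y-x)`
admits no local additive decomposition `f(x,y) = ψ(φ₁(x) + φ₂(y))` with smooth
`ψ, φ₁, φ₂` on any nonempty open set. -/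
theorem nondegenerate_sum_product :
    ¬ ∃ (U : Set (ℝ × ℝ)) (ψ φ₁ φ₂ : ℝ → ℝ),
        IsOpen U ∧ U.Nonempty ∧
        ContDiff ℝ (⊤ : ℕ∞) ψ ∧ ContDiff ℝ (⊤ : ℕ∞) φ₁ ∧ ContDiff ℝ (⊤ : ℕ∞) φ₂ ∧
        ∀ p ∈ U, p.1 * (p.2 - p.1) = ψ (φ₁ p.1 + φ₂ p.2) := by
  rintro ⟨U, ψ, φ₁, φ₂, hU, ⟨p₀, hp₀⟩, hψ, hφ₁, hφ₂, h⟩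
  have hψd : Differentiable ℝ ψ := hψ.differentiable (by simp)
  have hφ₁d : Differentiable ℝ φ₁ := hφ₁.differentiable (by simp)
  have hφ₂d : Differentiable ℝ φ₂ := hφ₂.differentiable (by simp)
  -- find a point of U with nonzero first coordinate
  obtain ⟨r₀, hr₀, hball₀⟩ := Metric.isOpen_iff.1 hU p₀ hp₀
  set a : ℝ := if p₀.1 = 0 then r₀ / 2 else p₀.1 with ha_def
  have ha : a ≠ 0 := by
    rw [ha_def]; split_ifs with hp
    · positivity
    · exact hp
  have hqU : ((a, p₀.2) : ℝ × ℝ) ∈ U := by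
    apply hball₀
    rw [Metric.mem_ball, Prod.dist_eq]
    apply max_lt
    · rw [Real.dist_eq, ha_def]
      split_ifs with hp
      · rw [hp, sub_zero, abs_of_pos (by positivity)]; linarith
      · simpa using hr₀
    · simpa using hr₀
  set b : ℝ := p₀.2 with hb_def
  obtain ⟨r, hr, hball⟩ := Metric.isOpen_iff.1 hU (a, b) hqU
  have hmem : ∀ x y : ℝ, |x - a| < r → |y - b| < r → ((x, y) : ℝ × ℝ) ∈ U := by
    intro x y hx hy
    apply hball
    rw [Metric.mem_ball, Prod.dist_eq]
    exact max_lt (by simpa [Real.dist_eq] using hx) (by simpa [Real.dist_eq] using hy)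
  -- derivative in y
  have keyA : ∀ x y : ℝ, |x - a| < r → |y - b| < r →
      x = deriv ψ (φ₁ x + φ₂ y) * deriv φ₂ y := by
    intro x y hx hy
    have hinner : HasDerivAt (fun y' => φ₁ x + φ₂ y') (deriv φ₂ y) y :=
      ((hφ₂d y).hasDerivAt).const_add (φ₁ x)
    have h1 : HasDerivAt (fun y' => ψ (φ₁ x + φ₂ y'))
        (deriv ψ (φ₁ x + φ₂ y) * deriv φ₂ y) y :=
      (hψd (φ₁ x + φ₂ y)).hasDerivAt.comp y hinner
    have heq : (fun y' => x * (y' - x)) =ᶠ[nhds y] (fun y' => ψ (φ₁ x + φ₂ y')) := by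
      have hmemnhds : Metric.ball b r ∈ nhds y :=
        Metric.isOpen_ball.mem_nhds (by simpa [Real.dist_eq] using hy)
      filter_upwards [hmemnhds] with y' hy'
      exact h (x, y') (hmem x y' hx (by simpa [Real.dist_eq] using hy'))
    have h2 : HasDerivAt (fun y' => x * (y' - x))
        (deriv ψ (φ₁ x + φ₂ y) * deriv φ₂ y) y := h1.congr_of_eventuallyEq heq
    have h3 : HasDerivAt (fun y' => x * (y' - x)) x y := by
      simpa using ((hasDerivAt_id y).sub_const x).const_mul x
    exact h3.unique h2
  -- derivative in x
  have keyB : ∀ x y : ℝ, |x - a| < r → |y - b| < r →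
      y - 2 * x = deriv ψ (φ₁ x + φ₂ y) * deriv φ₁ x := by
    intro x y hx hy
    have hinner : HasDerivAt (fun x' => φ₁ x' + φ₂ y) (deriv φ₁ x) x :=
      ((hφ₁d x).hasDerivAt).add_const (φ₂ y)
    have h1 : HasDerivAt (fun x' => ψ (φ₁ x' + φ₂ y))
        (deriv ψ (φ₁ x + φ₂ y) * deriv φ₁ x) x :=
      (hψd (φ₁ x + φ₂ y)).hasDerivAt.comp x hinner
    have heq : (fun x' => x' * (y - x')) =ᶠ[nhds x] (fun x' => ψ (φ₁ x' + φ₂ y)) := by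
      have hmemnhds : Metric.ball a r ∈ nhds x :=
        Metric.isOpen_ball.mem_nhds (by simpa [Real.dist_eq] using hx)
      filter_upwards [hmemnhds] with x' hx'
      exact h (x', y) (hmem x' y (by simpa [Real.dist_eq] using hx') hy)
    have h2 : HasDerivAt (fun x' => x' * (y - x'))
        (deriv ψ (φ₁ x + φ₂ y) * deriv φ₁ x) x := h1.congr_of_eventuallyEq heq
    have h3 : HasDerivAt (fun x' => x' * (y - x')) (y - 2 * x) x := by
      have : HasDerivAt (fun x' => x' * (y - x')) (1 * (y - x) + x * -1) x := (hasDerivAt_id x).mul ((hasDerivAt_id x).const_sub y)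
      convert this using 1
      ring
    exact h3.unique h2
  -- combined equation
  have E : ∀ x y : ℝ, |x - a| < r → |y - b| < r →
      x * deriv φ₁ x = (y - 2 * x) * deriv φ₂ y := by
    intro x y hx hy
    have hA := keyA x y hx hy
    have hB := keyB x y hx hy
    linear_combination (deriv φ₁ x) * hA - (deriv φ₂ y) * hB
  have hxa : |a - a| < r := by simpa using hr
  have hxb : |b - b| < r := by simpa using hr
  have hx2 : |(a + r / 2) - a| < r := by
    rw [show (a + r / 2) - a = r / 2 by ring, abs_of_pos (by positivity)]; linarith
  have hy2 : |(b + r / 2) - b| < r := by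
    rw [show (b + r / 2) - b = r / 2 by ring, abs_of_pos (by positivity)]; linarith
  have e11 := E a b hxa hxb
  have e12 := E a (b + r / 2) hxa hy2
  have e21 := E (a + r / 2) b hx2 hxb
  have e22 := E (a + r / 2) (b + r / 2) hx2 hy2
  set g₁ := deriv φ₂ b with hg₁
  set g₂ := deriv φ₂ (b + r / 2) with hg₂
  have h13 : (b - 2 * a) * g₁ = (b + r / 2 - 2 * a) * g₂ := by
    linear_combination e12 - e11
  have h24 : (b - 2 * (a + r / 2)) * g₁ = (b + r / 2 - 2 * (a + r / 2)) * g₂ := by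
    linear_combination e22 - e21
  have hgg : g₁ = g₂ := by
    have hr' : r ≠ 0 := ne_of_gt hr
    have : r * (g₁ - g₂) = 0 := by linear_combination h13 - h24
    have := mul_eq_zero.1 this
    rcases this with h' | h'
    · exact absurd h' hr'
    · linarith
  have hg0 : g₁ = 0 := by
    have hr' : r ≠ 0 := ne_of_gt hr
    have : (r / 2) * g₁ = 0 := by
      rw [hgg] at h13 ⊢
      linear_combination -h13
    rcases mul_eq_zero.1 this with h' | h'
    · exact absurd h' (by positivity)
    · exact h'
  have := keyA a b hxa hxb
  rw [← hg₁, hg0, mul_zero] at this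
  exact ha this
end
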